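/- Let Ψ ∈ ℂ² ⊗ ℂ² ⊗ ℂ² be nonzero. Then Ψ is SLOCC-equivalent to e₁⊗e₁⊗e₁ + e₁⊗e₂⊗e₂ (i.e. Ψ = φ ⊗ Φ with φ ∈ ℂ² and Φ ∈ ℂ² ⊗ ℂ² entangled) if and only if rank C⁽¹⁾(Ψ) = 1 and rank C⁽²⁾(Ψ) = rank C⁽³⁾(Ψ) = 2. -/

import Mathlib

open scoped TensorProduct

/-- The standard basis vectors of `ℂ²` (`e 0 = e₁`, `e 1 = e₂`). -/
noncomputable def e (i : Fin 2) : Fin 2 → ℂ := Pi.single i 1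

/-- The space of three qubits, `ℂ² ⊗ ℂ² ⊗ ℂ²`. -/
abbrev Qubit3 := (Fin 2 → ℂ) ⊗[ℂ] ((Fin 2 → ℂ) ⊗[ℂ] (Fin 2 → ℂ))

/-- The coefficients `c_{i₁i₂i₃}` of a three-qubit state in the standard product basis. -/
noncomputable def coeff3 (Ψ : Qubit3) (i₁ i₂ i₃ : Fin 2) : ℂ :=
  (((Pi.basisFun ℂ (Fin 2)).tensorProduct
      ((Pi.basisFun ℂ (Fin 2)).tensorProduct (Pi.basisFun ℂ (Fin 2)))).repr Ψ) (i₁, i₂, i₃)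

/-- The coefficient matrix `C⁽¹⁾(Ψ)` for the partition 1|23. -/
noncomputable def Cmat1 (Ψ : Qubit3) : Matrix (Fin 2) (Fin 2 × Fin 2) ℂ :=
  Matrix.of fun i p => coeff3 Ψ i p.1 p.2

/-- The coefficient matrix `C⁽²⁾(Ψ)` for the partition 2|13. -/
noncomputable def Cmat2 (Ψ : Qubit3) : Matrix (Fin 2) (Fin 2 × Fin 2) ℂ :=
  Matrix.of fun i p => coeff3 Ψ p.1 i p.2

/-- The coefficient matrix `C⁽³⁾(Ψ)` for the partition 3|12. -/
noncomputable def Cmat3 (Ψ : Qubit3) : Matrix (Fin 2) (Fin 2 × Fin 2) ℂ :=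
  Matrix.of fun i p => coeff3 Ψ p.1 p.2 i

/-- The action of a triple of linear maps on the three-qubit space. -/
noncomputable def map3 (F1 F2 F3 : (Fin 2 → ℂ) →ₗ[ℂ] (Fin 2 → ℂ)) :
    Qubit3 →ₗ[ℂ] Qubit3 :=
  TensorProduct.map F1 (TensorProduct.map F2 F3)

/-! ### Auxiliary machinery -/

open Matrix in
set_option maxHeartbeats 1000000 in
set_option synthInstance.maxHeartbeats 200000 in
example : True := trivial

open Matrix

set_option maxHeartbeats 800000
set_option synthInstance.maxHeartbeats 200000

/-- The product basis of `Qubit3`. -/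
noncomputable def B3 : Module.Basis (Fin 2 × Fin 2 × Fin 2) ℂ Qubit3 :=
  (Pi.basisFun ℂ (Fin 2)).tensorProduct
    ((Pi.basisFun ℂ (Fin 2)).tensorProduct (Pi.basisFun ℂ (Fin 2)))

lemma coeff3_def (Ψ : Qubit3) (i j k : Fin 2) :
    coeff3 Ψ i j k = B3.repr Ψ (i, j, k) := rfl

lemma B3_apply (a b d : Fin 2) : B3 (a, b, d) = e a ⊗ₜ[ℂ] (e b ⊗ₜ[ℂ] e d) := by
  simp [B3, Module.Basis.tensorProduct_apply, e]

lemma coeff3_ext {Ψ Φ : Qubit3} (h : ∀ i j k, coeff3 Ψ i j k = coeff3 Φ i j k) : Ψ = Φ := by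
  apply B3.repr.injective
  ext p
  exact h p.1 p.2.1 p.2.2

lemma coeff3_tmul (x y z : Fin 2 → ℂ) (i j k : Fin 2) :
    coeff3 (x ⊗ₜ[ℂ] (y ⊗ₜ[ℂ] z)) i j k = x i * (y j * z k) := by
  simp only [coeff3_def, B3, Module.Basis.tensorProduct_repr_tmul_apply, Pi.basisFun_repr,
    smul_eq_mul]
  ring

lemma coeff3_add (Ψ Φ : Qubit3) (i j k : Fin 2) :
    coeff3 (Ψ + Φ) i j k = coeff3 Ψ i j k + coeff3 Φ i j k := by
  rw [coeff3_def, coeff3_def, coeff3_def, map_add, Finsupp.add_apply]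

lemma coeff3_smul (c : ℂ) (Ψ : Qubit3) (i j k : Fin 2) :
    coeff3 (c • Ψ) i j k = c * coeff3 Ψ i j k := by
  rw [coeff3_def, coeff3_def, _root_.map_smul, Finsupp.smul_apply, smul_eq_mul]

lemma coeff3_zero (i j k : Fin 2) : coeff3 (0 : Qubit3) i j k = 0 := by
  rw [coeff3_def, map_zero, Finsupp.coe_zero, Pi.zero_apply]

lemma coeff3_sum {α : Type*} (s : Finset α) (f : α → Qubit3) (i j k : Fin 2) :
    coeff3 (∑ a ∈ s, f a) i j k = ∑ a ∈ s, coeff3 (f a) i j k := by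
  rw [coeff3_def, map_sum, Finsupp.finset_sum_apply]
  rfl

lemma sum_coeff3 (Ψ : Qubit3) :
    ∑ a, ∑ b, ∑ d, coeff3 Ψ a b d • (e a ⊗ₜ[ℂ] (e b ⊗ₜ[ℂ] e d)) = Ψ := by
  conv_rhs => rw [← B3.sum_repr Ψ]
  rw [Fintype.sum_prod_type]
  refine Finset.sum_congr rfl fun a _ => ?_
  rw [Fintype.sum_prod_type]
  refine Finset.sum_congr rfl fun b _ => Finset.sum_congr rfl fun d _ => ?_
  rw [coeff3_def, B3_apply]

lemma map3_tmul (F1 F2 F3 : (Fin 2 → ℂ) →ₗ[ℂ] (Fin 2 → ℂ)) (x y z : Fin 2 → ℂ) :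
    map3 F1 F2 F3 (x ⊗ₜ[ℂ] (y ⊗ₜ[ℂ] z)) = F1 x ⊗ₜ[ℂ] (F2 y ⊗ₜ[ℂ] F3 z) := by
  simp [map3]

lemma coeff3_map3 (F1 F2 F3 : (Fin 2 → ℂ) →ₗ[ℂ] (Fin 2 → ℂ)) (Ψ : Qubit3) (i j k : Fin 2) :
    coeff3 (map3 F1 F2 F3 Ψ) i j k
      = ∑ a, ∑ b, ∑ d, (F1 (e a) i * (F2 (e b) j * F3 (e d) k)) * coeff3 Ψ a b d := by
  conv_lhs => rw [← sum_coeff3 Ψ]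
  rw [map_sum, coeff3_sum]
  refine Finset.sum_congr rfl fun a _ => ?_
  rw [map_sum, coeff3_sum]
  refine Finset.sum_congr rfl fun b _ => ?_
  rw [map_sum, coeff3_sum]
  refine Finset.sum_congr rfl fun d _ => ?_
  rw [_root_.map_smul, coeff3_smul, map3_tmul, coeff3_tmul]
  ring

/-- The key normal form: `Ψ = u ⊗ w` with `u ≠ 0` and `w` having invertible
coefficient matrix `V`. -/
def GoodDecomp (Ψ : Qubit3) : Prop :=
  ∃ (u : Fin 2 → ℂ) (V : Matrix (Fin 2) (Fin 2) ℂ), u ≠ 0 ∧ IsUnit V ∧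
    ∀ i j k, coeff3 Ψ i j k = u i * V j k

/-- The auxiliary rectangular matrix `P b (i,k) = u i • δ_{b k}`. -/
noncomputable def Pmat (u : Fin 2 → ℂ) : Matrix (Fin 2) (Fin 2 × Fin 2) ℂ :=
  Matrix.of fun b p => u p.1 * (if b = p.2 then 1 else 0)

lemma cmat2_factor {Ψ : Qubit3} {u : Fin 2 → ℂ} {V : Matrix (Fin 2) (Fin 2) ℂ}
    (hc : ∀ i j k, coeff3 Ψ i j k = u i * V j k) :
    Cmat2 Ψ = V * Pmat u := by
  ext j p
  simp only [Cmat2, Matrix.of_apply, Matrix.mul_apply, Pmat, hc]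
  rw [Fin.sum_univ_two]
  rcases p with ⟨i, k⟩
  fin_cases k <;> simp <;> ring

lemma cmat3_factor {Ψ : Qubit3} {u : Fin 2 → ℂ} {V : Matrix (Fin 2) (Fin 2) ℂ}
    (hc : ∀ i j k, coeff3 Ψ i j k = u i * V j k) :
    Cmat3 Ψ = Vᵀ * Pmat u := by
  ext k p
  simp only [Cmat3, Matrix.of_apply, Matrix.mul_apply, Pmat, Matrix.transpose_apply, hc]
  rw [Fin.sum_univ_two]
  rcases p with ⟨i, j⟩
  fin_cases j <;> simp <;> ring

lemma rank_Pmat {u : Fin 2 → ℂ} (hu : u ≠ 0) : (Pmat u).rank = 2 := by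
  obtain ⟨i0, hi0⟩ := Function.ne_iff.mp hu
  have hle : (Pmat u).rank ≤ 2 := by
    simpa using (Pmat u).rank_le_card_height
  set Q : Matrix (Fin 2 × Fin 2) (Fin 2) ℂ := Matrix.of fun p b =>
      (if p.1 = i0 then (u i0)⁻¹ else 0) * (if p.2 = b then 1 else 0) with hQdef
  have hQ : Pmat u * Q = 1 := by
    ext b b'
    simp only [Matrix.mul_apply, Pmat, hQdef, Matrix.of_apply, Fintype.sum_prod_type,
      Fin.sum_univ_two]
    fin_cases i0 <;> fin_cases b <;> fin_cases b' <;>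
      simp_all [Matrix.one_apply, mul_inv_cancel₀]
  have hge : 2 ≤ (Pmat u).rank := by
    have h := Matrix.rank_mul_le_left (Pmat u) Q
    rw [hQ] at h
    simpa using h
  omega

lemma matrix_ne_zero_of_entry {m n : Type*} [Fintype m] [Fintype n]
    {M : Matrix m n ℂ} {i : m} {j : n} (h : M i j ≠ 0) : M ≠ 0 := by
  intro h0; apply h; rw [h0]; rfl

lemma rank_ne_zero_of_ne_zero {m n : Type*} [Fintype m] [Fintype n] [DecidableEq n]
    {M : Matrix m n ℂ} (hM : M ≠ 0) : M.rank ≠ 0 := by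
  intro h
  apply hM
  rw [Matrix.rank] at h
  have hr : LinearMap.range M.mulVecLin = ⊥ := Submodule.finrank_eq_zero.mp h
  have h0 : M.mulVecLin = 0 := LinearMap.range_eq_bot.mp hr
  ext i j
  have := congrFun (congrArg (fun f => f (Pi.single j 1)) h0) i
  simpa [Matrix.mulVecLin_apply] using this

lemma V_ne_zero {V : Matrix (Fin 2) (Fin 2) ℂ} (hV : IsUnit V) : V ≠ 0 := by
  intro h0
  have := (Matrix.isUnit_iff_isUnit_det V).mp hV
  rw [h0] at this
  simp at this

lemma ranks_of_good {Ψ : Qubit3} (h : GoodDecomp Ψ) :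
    (Cmat1 Ψ).rank = 1 ∧ (Cmat2 Ψ).rank = 2 ∧ (Cmat3 Ψ).rank = 2 := by
  obtain ⟨u, V, hu, hV, hc⟩ := h
  have hVdet : IsUnit V.det := (Matrix.isUnit_iff_isUnit_det V).mp hV
  refine ⟨?_, ?_, ?_⟩
  · -- rank Cmat1 = 1
    have hfac : Cmat1 Ψ = (Matrix.of fun (i : Fin 2) (_ : Fin 1) => u i) *
        (Matrix.of fun (_ : Fin 1) (p : Fin 2 × Fin 2) => V p.1 p.2) := by
      ext i p
      simp [Cmat1, Matrix.mul_apply, hc]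
    have hle : (Cmat1 Ψ).rank ≤ 1 := by
      rw [hfac]
      refine le_trans (Matrix.rank_mul_le_left _ _) ?_
      refine le_trans (Matrix.rank_le_card_width _) ?_
      simp
    have hne : (Cmat1 Ψ).rank ≠ 0 := by
      obtain ⟨i0, hi0⟩ := Function.ne_iff.mp hu
      obtain ⟨j0, k0, hjk⟩ : ∃ j k, V j k ≠ 0 := by
        by_contra hcon
        push_neg at hcon
        exact V_ne_zero hV (by ext j k; simp [hcon])
      refine rank_ne_zero_of_ne_zero (matrix_ne_zero_of_entry (i := i0) (j := (j0, k0)) ?_)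
      simp only [Cmat1, Matrix.of_apply, hc]
      exact mul_ne_zero hi0 hjk
    omega
  · rw [cmat2_factor hc, Matrix.rank_mul_eq_right_of_isUnit_det V _ hVdet, rank_Pmat hu]
  · rw [cmat3_factor hc, Matrix.rank_mul_eq_right_of_isUnit_det Vᵀ _
      ((Matrix.isUnit_iff_isUnit_det _).mp ((Matrix.isUnit_transpose V).mpr hV)), rank_Pmat hu]

lemma good_of_ranks {Ψ : Qubit3} (hΨ : Ψ ≠ 0) (h1 : (Cmat1 Ψ).rank = 1)
    (h2 : (Cmat2 Ψ).rank = 2) : GoodDecomp Ψ := by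
  have hspan : Module.finrank ℂ (Submodule.span ℂ (Set.range (Cmat1 Ψ))) = 1 := by
    exact (Matrix.rank_eq_finrank_span_row (Cmat1 Ψ)).symm.trans h1
  obtain ⟨w, hw0, hwall⟩ := finrank_eq_one_iff'.mp hspan
  choose c hcs using fun i : Fin 2 =>
    hwall ⟨Cmat1 Ψ i, Submodule.subset_span ⟨i, rfl⟩⟩
  have hrow : ∀ i : Fin 2, c i • (w : Fin 2 × Fin 2 → ℂ) = Cmat1 Ψ i := by
    intro i
    have := congrArg Subtype.val (hcs i)
    simpa using this
  set V : Matrix (Fin 2) (Fin 2) ℂ := Matrix.of fun j k => (w : Fin 2 × Fin 2 → ℂ) (j, k)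
    with hVdef
  have hc : ∀ i j k, coeff3 Ψ i j k = c i * V j k := by
    intro i j k
    have := congrFun (hrow i) (j, k)
    simpa [Cmat1, V] using this.symm
  have hu : c ≠ 0 := by
    intro h0
    apply hΨ
    apply coeff3_ext (Φ := 0)
    intro i j k
    rw [hc, coeff3_zero, h0]
    simp
  refine ⟨c, V, hu, ?_, hc⟩
  -- invertibility of V from rank Cmat2 = 2
  have hfac := cmat2_factor hc
  have hge : 2 ≤ V.rank := by
    calc 2 = (Cmat2 Ψ).rank := h2.symm
    _ = (V * Pmat c).rank := by rw [hfac]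
    _ ≤ V.rank := Matrix.rank_mul_le_left _ _
  have hle : V.rank ≤ 2 := by simpa using V.rank_le_card_width
  have hrank : V.rank = 2 := le_antisymm hle hge
  have hsurj : Function.Surjective V.mulVec := by
    have htop : LinearMap.range V.mulVecLin = ⊤ := by
      apply Submodule.eq_top_of_finrank_eq
      rw [← Matrix.rank, hrank, Module.finrank_pi]
      simp
    have hsurj' : Function.Surjective V.mulVecLin := LinearMap.range_eq_top.mp htop
    intro v
    obtain ⟨x, hx⟩ := hsurj' v
    exact ⟨x, by simpa [Matrix.mulVecLin_apply] using hx⟩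
  exact Matrix.mulVec_surjective_iff_isUnit.mp hsurj

/-- A unit matrix as a linear equivalence by `mulVec`. -/
noncomputable def matEquiv (M : Matrix (Fin 2) (Fin 2) ℂ) (h : IsUnit M.det) :
    (Fin 2 → ℂ) ≃ₗ[ℂ] (Fin 2 → ℂ) :=
  LinearEquiv.ofLinear (Matrix.toLin' M) (Matrix.toLin' M⁻¹)
    (by rw [← Matrix.toLin'_mul, Matrix.mul_nonsing_inv _ h, Matrix.toLin'_one])
    (by rw [← Matrix.toLin'_mul, Matrix.nonsing_inv_mul _ h, Matrix.toLin'_one])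

lemma matEquiv_apply (M : Matrix (Fin 2) (Fin 2) ℂ) (h : IsUnit M.det) (x : Fin 2 → ℂ) :
    matEquiv M h x = M *ᵥ x := rfl

lemma slocc_of_good {Ψ : Qubit3} (h : GoodDecomp Ψ) :
    ∃ F1 F2 F3 : (Fin 2 → ℂ) ≃ₗ[ℂ] (Fin 2 → ℂ),
      map3 F1.toLinearMap F2.toLinearMap F3.toLinearMap Ψ
        = e 0 ⊗ₜ[ℂ] (e 0 ⊗ₜ[ℂ] e 0) + e 0 ⊗ₜ[ℂ] (e 1 ⊗ₜ[ℂ] e 1) := by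
  obtain ⟨u, V, hu, hV, hc⟩ := h
  -- a matrix with first column `u`, invertible since `u ≠ 0`
  set A : Matrix (Fin 2) (Fin 2) ℂ :=
    Matrix.of ![![u 0, -(starRingEnd ℂ) (u 1)], ![u 1, (starRingEnd ℂ) (u 0)]] with hAdef
  have hdetA : A.det ≠ 0 := by
    have hA : A.det = (Complex.normSq (u 0) + Complex.normSq (u 1) : ℝ) := by
      simp only [hAdef, Matrix.det_fin_two, Matrix.of_apply, Matrix.cons_val', Matrix.cons_val_zero,
        Matrix.cons_val_one, Matrix.head_cons, Matrix.empty_val', Matrix.cons_val_fin_one,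
        Matrix.head_fin_const]
      rw [Complex.mul_conj, neg_mul, sub_neg_eq_add, mul_comm ((starRingEnd ℂ) (u 1)),
        Complex.mul_conj]
      push_cast
      ring
    rw [hA]
    have : Complex.normSq (u 0) + Complex.normSq (u 1) ≠ 0 := by
      intro h0
      have h00 : Complex.normSq (u 0) = 0 ∧ Complex.normSq (u 1) = 0 := by
        constructor <;> nlinarith [Complex.normSq_nonneg (u 0), Complex.normSq_nonneg (u 1)]
      apply hu
      ext i
      fin_cases i
      · exact Complex.normSq_eq_zero.mp h00.1
      · exact Complex.normSq_eq_zero.mp h00.2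
    exact_mod_cast fun hcast => this (by exact_mod_cast hcast)
  have hdetAu : IsUnit A.det := isUnit_iff_ne_zero.mpr hdetA
  have hdetAinv : IsUnit A⁻¹.det :=
    (Matrix.isUnit_iff_isUnit_det _).mp
      ((Matrix.isUnit_iff_isUnit_det _).mpr (Matrix.isUnit_det_of_left_inverse (Matrix.mul_nonsing_inv A hdetAu)))
  have hVdet : IsUnit V.det := (Matrix.isUnit_iff_isUnit_det V).mp hV
  have hVinvdet : IsUnit V⁻¹.det :=
    (Matrix.isUnit_iff_isUnit_det _).mp
      ((Matrix.isUnit_iff_isUnit_det _).mpr (Matrix.isUnit_det_of_left_inverse (Matrix.mul_nonsing_inv V hVdet)))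
  refine ⟨matEquiv A⁻¹ hdetAinv, matEquiv V⁻¹ hVinvdet, LinearEquiv.refl ℂ _, ?_⟩
  apply coeff3_ext
  intro i j k
  rw [coeff3_map3]
  have hF1 : ∀ a, (matEquiv A⁻¹ hdetAinv) (e a) i = A⁻¹ i a := by
    intro a
    rw [matEquiv_apply]
    simp [e]
  have hF2 : ∀ b, (matEquiv V⁻¹ hVinvdet) (e b) j = V⁻¹ j b := by
    intro b
    rw [matEquiv_apply]
    simp [e]
  have hmain : ∑ a, ∑ b, ∑ d,
      ((matEquiv A⁻¹ hdetAinv).toLinearMap (e a) i *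
        ((matEquiv V⁻¹ hVinvdet).toLinearMap (e b) j *
          (LinearEquiv.refl ℂ (Fin 2 → ℂ)).toLinearMap (e d) k)) * coeff3 Ψ a b d
      = (∑ a, A⁻¹ i a * u a) * (∑ b, V⁻¹ j b * V b k) := by
    rw [Finset.sum_mul_sum]
    refine Finset.sum_congr rfl fun a _ => Finset.sum_congr rfl fun b _ => ?_
    have hd : ∀ d : Fin 2, ((matEquiv A⁻¹ hdetAinv).toLinearMap (e a) i *
        ((matEquiv V⁻¹ hVinvdet).toLinearMap (e b) j *
          (LinearEquiv.refl ℂ (Fin 2 → ℂ)).toLinearMap (e d) k)) * coeff3 Ψ a b d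
        = (A⁻¹ i a * u a * (V⁻¹ j b)) * (e d k * V b d) := by
      intro d
      simp only [LinearEquiv.coe_coe, hF1, hF2, LinearEquiv.refl_apply, hc]
      ring
    rw [Fin.sum_univ_two, hd 0, hd 1]
    have hek : e 0 k * V b 0 + e 1 k * V b 1 = V b k := by
      fin_cases k <;> simp [e]
    calc A⁻¹ i a * u a * V⁻¹ j b * (e 0 k * V b 0) +
          A⁻¹ i a * u a * V⁻¹ j b * (e 1 k * V b 1)
        = A⁻¹ i a * u a * V⁻¹ j b * (e 0 k * V b 0 + e 1 k * V b 1) := by ring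
      _ = A⁻¹ i a * u a * (V⁻¹ j b * V b k) := by rw [hek]; ring
  rw [hmain]
  have hAu : A⁻¹ *ᵥ u = e 0 := by
    have hu0 : u = A *ᵥ Pi.single (0 : Fin 2) (1 : ℂ) := by
      funext i'
      rw [Matrix.mulVec_single]
      fin_cases i' <;> simp [hAdef]
    rw [hu0, Matrix.mulVec_mulVec, Matrix.nonsing_inv_mul A hdetAu, Matrix.one_mulVec]
    rfl
  have hsum1 : ∑ a, A⁻¹ i a * u a = e 0 i := by
    rw [← hAu]
    simp [Matrix.mulVec, dotProduct]
  have hsum2 : ∑ b, V⁻¹ j b * V b k = (1 : Matrix (Fin 2) (Fin 2) ℂ) j k := by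
    rw [← Matrix.nonsing_inv_mul V hVdet]
    simp [Matrix.mul_apply]
  rw [hsum1, hsum2, coeff3_add, coeff3_tmul, coeff3_tmul]
  fin_cases i <;> fin_cases j <;> fin_cases k <;>
    simp [e, Matrix.one_apply]

lemma good_of_slocc {Ψ : Qubit3}
    (F1 F2 F3 : (Fin 2 → ℂ) ≃ₗ[ℂ] (Fin 2 → ℂ))
    (h : map3 F1.toLinearMap F2.toLinearMap F3.toLinearMap Ψ
        = e 0 ⊗ₜ[ℂ] (e 0 ⊗ₜ[ℂ] e 0) + e 0 ⊗ₜ[ℂ] (e 1 ⊗ₜ[ℂ] e 1)) : GoodDecomp Ψ := by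
  have hcomp : ∀ x : Qubit3,
      map3 F1.symm.toLinearMap F2.symm.toLinearMap F3.symm.toLinearMap
        (map3 F1.toLinearMap F2.toLinearMap F3.toLinearMap x) = x := by
    intro x
    have hccc : map3 F1.symm.toLinearMap F2.symm.toLinearMap F3.symm.toLinearMap ∘ₗ
        map3 F1.toLinearMap F2.toLinearMap F3.toLinearMap = LinearMap.id := by
      rw [map3, map3, ← TensorProduct.map_comp, ← TensorProduct.map_comp]
      have h1 : F1.symm.toLinearMap ∘ₗ F1.toLinearMap = LinearMap.id := by ext x; simp
      have h2 : F2.symm.toLinearMap ∘ₗ F2.toLinearMap = LinearMap.id := by ext x; simp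
      have h3 : F3.symm.toLinearMap ∘ₗ F3.toLinearMap = LinearMap.id := by ext x; simp
      rw [h1, h2, h3, TensorProduct.map_id, TensorProduct.map_id]
    have := LinearMap.congr_fun hccc x
    simpa using this
  have hΨ : Ψ = F1.symm (e 0) ⊗ₜ[ℂ] (F2.symm (e 0) ⊗ₜ[ℂ] F3.symm (e 0)) +
      F1.symm (e 0) ⊗ₜ[ℂ] (F2.symm (e 1) ⊗ₜ[ℂ] F3.symm (e 1)) := by
    have := congrArg
      (map3 F1.symm.toLinearMap F2.symm.toLinearMap F3.symm.toLinearMap) h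
    rw [hcomp Ψ] at this
    rw [this, map_add, map3_tmul, map3_tmul]
    rfl
  set u := F1.symm (e 0) with hudef
  have hu : u ≠ 0 := by
    intro h0
    have : F1 u = F1 0 := by rw [h0]
    rw [hudef, F1.apply_symm_apply, map_zero] at this
    have := congrFun this 0
    simp [e] at this
  set B : Matrix (Fin 2) (Fin 2) ℂ := LinearMap.toMatrix' F2.symm.toLinearMap with hBdef
  set C : Matrix (Fin 2) (Fin 2) ℂ := LinearMap.toMatrix' F3.symm.toLinearMap with hCdef
  have hBapp : ∀ j l, B j l = F2.symm (e l) j := by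
    intro j l
    rw [hBdef, LinearMap.toMatrix'_apply]
    have : (fun j' => if j' = l then (1 : ℂ) else 0) = e l := by
      funext x; simp [e, Pi.single_apply]
    rfl
  have hCapp : ∀ k l, C k l = F3.symm (e l) k := by
    intro k l
    rw [hCdef, LinearMap.toMatrix'_apply]
    have : (fun j' => if j' = l then (1 : ℂ) else 0) = e l := by
      funext x; simp [e, Pi.single_apply]
    rfl
  have hBunit : IsUnit B := by
    apply (Matrix.isUnit_iff_isUnit_det _).mpr
    apply Matrix.isUnit_det_of_right_inverse (B := LinearMap.toMatrix' F2.toLinearMap)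
    rw [hBdef, ← LinearMap.toMatrix'_comp]
    have : F2.symm.toLinearMap ∘ₗ F2.toLinearMap = LinearMap.id := by ext x; simp
    rw [this, LinearMap.toMatrix'_id]
  have hCunit : IsUnit C := by
    apply (Matrix.isUnit_iff_isUnit_det _).mpr
    apply Matrix.isUnit_det_of_right_inverse (B := LinearMap.toMatrix' F3.toLinearMap)
    rw [hCdef, ← LinearMap.toMatrix'_comp]
    have : F3.symm.toLinearMap ∘ₗ F3.toLinearMap = LinearMap.id := by ext x; simp
    rw [this, LinearMap.toMatrix'_id]
  refine ⟨u, B * Cᵀ, hu, hBunit.mul ((Matrix.isUnit_transpose C).mpr hCunit), ?_⟩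
  intro i j k
  rw [hΨ, coeff3_add, coeff3_tmul, coeff3_tmul]
  rw [Matrix.mul_apply, Fin.sum_univ_two]
  simp only [Matrix.transpose_apply, hBapp, hCapp]
  ring

theorem class_0_1_Psi23_iff (Ψ : Qubit3) (hΨ : Ψ ≠ 0) :
    (∃ F1 F2 F3 : (Fin 2 → ℂ) ≃ₗ[ℂ] (Fin 2 → ℂ),
        map3 F1.toLinearMap F2.toLinearMap F3.toLinearMap Ψ
          = e 0 ⊗ₜ[ℂ] (e 0 ⊗ₜ[ℂ] e 0) + e 0 ⊗ₜ[ℂ] (e 1 ⊗ₜ[ℂ] e 1)) ↔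
      (Cmat1 Ψ).rank = 1 ∧ (Cmat2 Ψ).rank = 2 ∧ (Cmat3 Ψ).rank = 2 := by
  constructor
  · rintro ⟨F1, F2, F3, h⟩
    exact ranks_of_good (good_of_slocc F1 F2 F3 h)
  · rintro ⟨h1, h2, _⟩
    exact slocc_of_good (good_of_ranks hΨ h1 h2)
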